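/- Let (𝓜, ν) be a probability space, X an NPC space, and f ∈ L²(𝓜, X) (i.e. ∫ d²(f(m), P) dν(m) < ∞ for some, hence every, P ∈ X). Then there exists a unique point Q_{f,ν} ∈ X minimizing the function Q ↦ I_{f,ν}(Q) := ∫_𝓜 d²(f(m), Q) dν(m) over all Q ∈ X. -/

import Mathlib

open MeasureTheory

/-- `γ` restricted to `[a,b]` is a unit-speed (arclength-parameterized) geodesic:
`dist (γ s) (γ t) = |s − t|` for all `s, t ∈ [a,b]`. -/
def IsUnitSpeedGeodesicOn {X : Type*} [MetricSpace X] (γ : ℝ → X) (a b : ℝ) : Prop :=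
  ∀ s ∈ Set.Icc a b, ∀ t ∈ Set.Icc a b, dist (γ s) (γ t) = |s - t|

/-- An NPC space: a complete geodesic metric space satisfying the triangle
comparison inequality `d(P,Q_t)² ≤ (1−t)d(P,Q)² + t·d(P,R)² − t(1−t)d(Q,R)²`,
where `Q_t` is the point a fraction `t` along the geodesic from `Q` to `R`. -/
structure IsNPC (X : Type*) [MetricSpace X] : Prop where
  /-- `X` is complete. -/
  complete : CompleteSpace X
  /-- `X` is a length (geodesic) space: any two points are joined by a distance
  realizing curve. -/
  geodesic : ∀ P Q : X, ∃ γ : ℝ → X,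
    γ 0 = P ∧ γ (dist P Q) = Q ∧ IsUnitSpeedGeodesicOn γ 0 (dist P Q)
  /-- triangle comparison: for every geodesic `γ` from `Q` to `R` and every
  `P ∈ X`, with `Q_t = γ(t · d(Q,R))`,
  `d(P,Q_t)² ≤ (1−t)d(P,Q)² + t·d(P,R)² − t(1−t)d(Q,R)²`. -/
  comparison : ∀ (P Q R : X) (γ : ℝ → X), γ 0 = Q → γ (dist Q R) = R →
    IsUnitSpeedGeodesicOn γ 0 (dist Q R) → ∀ t ∈ Set.Icc (0:ℝ) 1,
      dist P (γ (t * dist Q R)) ^ 2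
        ≤ (1 - t) * dist P Q ^ 2 + t * dist P R ^ 2 - t * (1 - t) * dist Q R ^ 2

/-- **Existence and uniqueness of the center of mass.** Let `(𝓜,ν)` be a
probability space, `X` an NPC space and `f ∈ L²(𝓜,X)` (i.e. the function
`m ↦ d²(f(m),P)` is integrable for some — hence every — `P ∈ X`).  Then there
exists a unique point `Q_{f,ν} ∈ X` minimizing
`Q ↦ I_{f,ν}(Q) = ∫_𝓜 d²(f(m),Q) dν(m)` over all `Q ∈ X`. -/
theorem exists_unique_center_of_mass {X : Type*} [MetricSpace X] (hX : IsNPC X)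
    {𝓜 : Type*} [MeasurableSpace 𝓜] (ν : Measure 𝓜) [IsProbabilityMeasure ν]
    (f : 𝓜 → X)
    (hmeas : ∀ Q : X, AEStronglyMeasurable (fun m => dist (f m) Q ^ 2) ν)
    (hL2 : ∃ P : X, Integrable (fun m => dist (f m) P ^ 2) ν) :
    ∃! Q : X, ∀ Q' : X,
      (∫ m, dist (f m) Q ^ 2 ∂ν) ≤ ∫ m, dist (f m) Q' ^ 2 ∂ν := by
  classical
  haveI := hX.complete
  obtain ⟨P, hP⟩ := hL2
  -- `m ↦ d(f m, Q)²` is integrable for every `Q`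
  have hint : ∀ Q : X, Integrable (fun m => dist (f m) Q ^ 2) ν := by
    intro Q
    have hbd : Integrable (fun m => 2 * dist (f m) P ^ 2 + 2 * dist P Q ^ 2) ν :=
      (hP.const_mul 2).add (integrable_const _)
    refine Integrable.mono' hbd (hmeas Q) ?_
    filter_upwards with m
    have h1 := dist_triangle (f m) P Q
    have h2 := dist_nonneg (x := f m) (y := P)
    have h3 := dist_nonneg (x := P) (y := Q)
    rw [Real.norm_eq_abs, abs_of_nonneg (by positivity)]
    have h4 : dist (f m) Q ^ 2 ≤ (dist (f m) P + dist P Q) ^ 2 := by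
      have := dist_nonneg (x := f m) (y := Q)
      nlinarith
    nlinarith [sq_nonneg (dist (f m) P - dist P Q)]
  set I : X → ℝ := fun Q => ∫ m, dist (f m) Q ^ 2 ∂ν with hIdef
  have hInonneg : ∀ Q, 0 ≤ I Q := fun Q => integral_nonneg (fun m => by positivity)
  -- midpoint inequality
  have hmid : ∀ Q R : X, ∃ M : X,
      I M ≤ (1/2) * I Q + (1/2) * I R - (1/4) * dist Q R ^ 2 := by
    intro Q R
    obtain ⟨γ, hγ0, hγ1, hγ⟩ := hX.geodesic Q R
    refine ⟨γ ((1/2) * dist Q R), ?_⟩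
    have hpt : ∀ m, dist (f m) (γ ((1/2) * dist Q R)) ^ 2 ≤
        (1 - 1/2) * dist (f m) Q ^ 2 + (1/2) * dist (f m) R ^ 2
          - (1/2) * (1 - 1/2) * dist Q R ^ 2 := fun m =>
      hX.comparison (f m) Q R γ hγ0 hγ1 hγ (1/2) (by norm_num)
    have int1 : Integrable (fun m =>
        (1 - 1/2) * dist (f m) Q ^ 2 + (1/2) * dist (f m) R ^ 2) ν :=
      ((hint Q).const_mul _).add ((hint R).const_mul _)
    calc I (γ ((1/2) * dist Q R))
        ≤ ∫ m, ((1 - 1/2) * dist (f m) Q ^ 2 + (1/2) * dist (f m) R ^ 2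
            - (1/2) * (1 - 1/2) * dist Q R ^ 2) ∂ν :=
          integral_mono (hint _) (int1.sub (integrable_const _)) hpt
      _ = (1/2) * I Q + (1/2) * I R - (1/4) * dist Q R ^ 2 := by
          rw [integral_sub int1 (integrable_const _),
            integral_add ((hint Q).const_mul _) ((hint R).const_mul _),
            integral_const_mul, integral_const_mul, integral_const]
          simp only [hIdef, measure_univ, probReal_univ, ENNReal.toReal_one, one_smul, smul_eq_mul]
          ring
  set S := Set.range I with hSdef
  have hSne : S.Nonempty := ⟨I P, P, rfl⟩
  have hSbdd : BddBelow S := ⟨0, by rintro _ ⟨Q, rfl⟩; exact hInonneg Q⟩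
  set c := sInf S with hcdef
  have hcle : ∀ Q, c ≤ I Q := fun Q => csInf_le hSbdd ⟨Q, rfl⟩
  set ε : ℕ → ℝ := fun n => 1/((n:ℝ)+1) with hεdef
  have hεpos : ∀ n, 0 < ε n := fun n => by positivity
  -- minimizing sequence
  have hseq : ∀ n : ℕ, ∃ Q : X, I Q < c + ε n := by
    intro n
    obtain ⟨y, ⟨Q, rfl⟩, hy⟩ := Real.lt_sInf_add_pos hSne (hεpos n)
    exact ⟨Q, hy⟩
  choose u hu using hseq
  -- the sequence is Cauchy
  have hd2 : ∀ n k : ℕ, dist (u n) (u k) ^ 2 ≤ 2 * ε n + 2 * ε k := by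
    intro n k
    obtain ⟨M, hM⟩ := hmid (u n) (u k)
    have h1 := hcle M
    have hn := hu n
    have hk := hu k
    linarith
  have hcauchy : CauchySeq u := by
    rw [Metric.cauchySeq_iff]
    intro δ hδ
    obtain ⟨N, hN⟩ := exists_nat_gt (4 / δ ^ 2)
    refine ⟨N, fun m hm n hn => ?_⟩
    have h2 := hd2 m n
    have hNpos : (0:ℝ) < (N:ℝ) + 1 := by positivity
    have hmN : ε m ≤ ε N := by
      apply div_le_div_of_nonneg_left (by norm_num) hNpos
      have : (N:ℝ) ≤ m := Nat.cast_le.mpr hm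
      linarith
    have hnN : ε n ≤ ε N := by
      apply div_le_div_of_nonneg_left (by norm_num) hNpos
      have : (N:ℝ) ≤ n := Nat.cast_le.mpr hn
      linarith
    have hlt : 4 * ε N < δ ^ 2 := by
      have hδ2 : 0 < δ ^ 2 := by positivity
      rw [div_lt_iff₀ hδ2] at hN
      have hεN : ε N = 1/((N:ℝ)+1) := rfl
      rw [hεN, mul_one_div, div_lt_iff₀ hNpos]
      nlinarith
    have hfin : dist (u m) (u n) ^ 2 < δ ^ 2 := by linarith
    exact lt_of_pow_lt_pow_left₀ 2 hδ.le hfin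
  obtain ⟨Q, hQlim⟩ := cauchySeq_tendsto_of_complete hcauchy
  -- continuity estimate of `I`
  have hcont : ∀ n, I Q ≤ I (u n) + dist Q (u n) * (3 + I Q + I (u n)) := by
    intro n
    set D := dist Q (u n) with hD
    have hDnn : (0:ℝ) ≤ D := dist_nonneg
    have hpt : ∀ m, dist (f m) Q ^ 2 ≤
        dist (f m) (u n) ^ 2 + D * (3 + dist (f m) Q ^ 2 + dist (f m) (u n) ^ 2) := by
      intro m
      set a := dist (f m) Q with ha
      set b := dist (f m) (u n) with hb
      have hann : (0:ℝ) ≤ a := dist_nonneg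
      have hbnn : (0:ℝ) ≤ b := dist_nonneg
      have hA : a ≤ b + D := by
        have h := dist_triangle (f m) (u n) Q
        have h' : dist (u n) Q = D := by rw [hD, dist_comm]
        rw [← ha, ← hb] at h
        linarith [h' ▸ h]
      have hB : D ≤ a + b := by
        have h := dist_triangle Q (f m) (u n)
        have h' : dist Q (f m) = a := by rw [ha, dist_comm]
        rw [← hD, ← hb] at h
        linarith [h' ▸ h]
      have key1 : (0:ℝ) ≤ 3 + a^2 + b^2 - 2*b - D := by
        nlinarith [sq_nonneg (a - 1/2), sq_nonneg (b - 3/2)]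
      have key2 : a^2 ≤ (b + D)^2 := by nlinarith
      nlinarith [mul_nonneg hDnn key1]
    have int2 : Integrable (fun m =>
        D * (3 + dist (f m) Q ^ 2 + dist (f m) (u n) ^ 2)) ν :=
      ((((integrable_const 3).add (hint Q)).add (hint (u n)))).const_mul D
    have int3 : Integrable (fun m =>
        3 + dist (f m) Q ^ 2 + dist (f m) (u n) ^ 2) ν :=
      (((integrable_const 3).add (hint Q)).add (hint (u n)))
    have int4 : Integrable (fun m => (3:ℝ) + dist (f m) Q ^ 2) ν :=
      (integrable_const 3).add (hint Q)
    calc I Q ≤ ∫ m, (dist (f m) (u n) ^ 2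
          + D * (3 + dist (f m) Q ^ 2 + dist (f m) (u n) ^ 2)) ∂ν :=
        integral_mono (hint Q) ((hint (u n)).add int2) hpt
      _ = I (u n) + D * (3 + I Q + I (u n)) := by
        rw [integral_add (hint (u n)) int2, integral_const_mul,
          integral_add int4 (hint (u n)), integral_add (integrable_const 3) (hint Q),
          integral_const]
        simp only [hIdef, measure_univ, probReal_univ, ENNReal.toReal_one, one_smul, smul_eq_mul]
        ring
  -- pass to the limit: I Q ≤ c
  have hIulim : Filter.Tendsto (fun n => I (u n)) Filter.atTop (nhds c) := by
    have hup : Filter.Tendsto (fun n : ℕ => c + ε n) Filter.atTop (nhds (c + 0)) :=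
      Filter.Tendsto.const_add c tendsto_one_div_add_atTop_nhds_zero_nat
    rw [add_zero] at hup
    exact tendsto_of_tendsto_of_tendsto_of_le_of_le tendsto_const_nhds hup
      (fun n => hcle (u n)) (fun n => (hu n).le)
  have hdlim : Filter.Tendsto (fun n => dist Q (u n)) Filter.atTop (nhds 0) := by
    have h := tendsto_iff_dist_tendsto_zero.mp hQlim
    simpa [dist_comm] using h
  have hIQc : I Q ≤ c := by
    have hrhs : Filter.Tendsto (fun n => I (u n) + dist Q (u n) * (3 + I Q + I (u n)))
        Filter.atTop (nhds (c + 0 * (3 + I Q + c))) :=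
      hIulim.add (hdlim.mul (tendsto_const_nhds.add hIulim))
    rw [zero_mul, add_zero] at hrhs
    exact ge_of_tendsto' hrhs hcont
  refine ⟨Q, fun Q' => hIQc.trans (hcle Q'), ?_⟩
  intro Q' hQ'
  have hQmin : ∀ R, I Q ≤ I R := fun R => hIQc.trans (hcle R)
  obtain ⟨M, hM⟩ := hmid Q' Q
  have h1 : I Q' ≤ I M := hQ' M
  have h2 : I Q ≤ I M := hQmin M
  have hd0 : dist Q' Q = 0 := by nlinarith [dist_nonneg (x := Q') (y := Q)]
  exact dist_eq_zero.mp hd0
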